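/- arXiv:0801.3790 — 2 statements merged into one kernel-verified Lean document; each statement's English description precedes it below -/
import Mathlib

section
/- If y is a vertex of P(G,w), then the support Y = { e : y_e > 0 } contains no directed cycle C with w(C) = 0. -/
open Finset

/-- A simple directed cycle, identified with its arc set: the arcs
`(f i, f (i+1))` of an injective map `f : ZMod (n+1) → V`. -/
def IsCycle {V : Type} [DecidableEq V] (C : Finset (V × V)) : Prop :=
  ∃ (n : ℕ) (f : ZMod (n + 1) → V), Function.Injective f ∧
    C = Finset.image (fun i => (f i, f (i + 1))) Finset.univ

/-- Characteristic vector of an arc set. -/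
def chi {V : Type} [DecidableEq V] (C : Finset (V × V)) : V × V → ℝ :=
  fun e => if e ∈ C then 1 else 0

/-- Membership in the polyhedron `P(G,w)` of negative-weight flows:
nonnegativity, support in `E`, flow conservation at every vertex, and
total weight `-1`. -/
def memP {V : Type} [Fintype V] [DecidableEq V] (E : Finset (V × V))
    (w : V × V → ℝ) (y : V × V → ℝ) : Prop :=
  (∀ e, 0 ≤ y e) ∧ (∀ e, e ∉ E → y e = 0) ∧
  (∀ u : V, ∑ e ∈ E.filter (fun e => e.1 = u), y e
          = ∑ e ∈ E.filter (fun e => e.2 = u), y e) ∧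
  (∑ e ∈ E, w e * y e = -1)

/-- A vertex (extreme point) of a convex set: a member which is not a proper
convex combination of two distinct members. -/
def IsVertexOf {α : Type*} [AddCommGroup α] [Module ℝ α] (P : Set α) (y : α) : Prop :=
  y ∈ P ∧ ¬ ∃ y₁ ∈ P, ∃ y₂ ∈ P, y₁ ≠ y₂ ∧
    ∃ t : ℝ, 0 < t ∧ t < 1 ∧ y = t • y₁ + (1 - t) • y₂

/-! If a zero-weight cycle `C` lies in the support of `y ∈ P(G,w)`, then `χ_C` is a circulation
of weight zero, so `y ± ε χ_C` both stay in `P(G,w)` for `ε = min_{e ∈ C} y_e > 0`, and `y` is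
their midpoint. -/

theorem IsVertexOf.eq_zero_of_add_mem_of_sub_mem {α : Type*} [AddCommGroup α] [Module ℝ α]
    {P : Set α} {y d : α} (hy : IsVertexOf P y) (hadd : y + d ∈ P) (hsub : y - d ∈ P) :
    d = 0 := by
  by_contra hd
  refine hy.2 ⟨y + d, hadd, y - d, hsub, ?_, 1 / 2, by norm_num, by norm_num, ?_⟩
  · intro h
    exact hd (by simpa [← two_smul ℝ d] using congrArg (· - (y - d)) h)
  · module

section Circulation

variable {V : Type} [DecidableEq V]

theorem IsCycle.nonempty {C : Finset (V × V)} (hC : IsCycle C) : C.Nonempty := by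
  obtain ⟨n, f, -, rfl⟩ := hC
  exact image_nonempty.2 univ_nonempty

theorem IsCycle.card_filter_fst_eq_card_filter_snd {C : Finset (V × V)} (hC : IsCycle C)
    (u : V) : #(C.filter (·.1 = u)) = #(C.filter (·.2 = u)) := by
  obtain ⟨n, f, hf, rfl⟩ := hC
  have harc : Function.Injective (fun i : ZMod (n + 1) => (f i, f (i + 1))) :=
    fun i j hij => hf (congrArg Prod.fst hij)
  rw [filter_image, filter_image, card_image_of_injective _ harc,
    card_image_of_injective _ harc]
  -- the arc leaving `u` at index `i` follows the arc entering `u` at index `i - 1`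
  refine card_bij' (fun i _ => i - 1) (fun j _ => j + 1) ?_ ?_ ?_ ?_ <;>
    simp

theorem sum_filter_chi {C s : Finset (V × V)} (hCs : C ⊆ s) (p : V × V → Prop)
    [DecidablePred p] : ∑ e ∈ s.filter p, chi C e = #(C.filter p) := by
  have hinter : s.filter p ∩ C = C.filter p := by
    ext e
    simp only [mem_inter, mem_filter]
    exact ⟨fun ⟨⟨_, hp⟩, hc⟩ => ⟨hc, hp⟩, fun ⟨hc, hp⟩ => ⟨⟨hCs hc, hp⟩, hc⟩⟩
  simp only [chi, sum_ite_mem, hinter, sum_const, nsmul_one]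

theorem sum_mul_chi {C s : Finset (V × V)} (hCs : C ⊆ s) (w : V × V → ℝ) :
    ∑ e ∈ s, w e * chi C e = ∑ e ∈ C, w e := by
  simp only [chi, mul_ite, mul_one, mul_zero, sum_ite_mem, inter_eq_right.2 hCs]

def zeroWeightCirculations (E : Finset (V × V)) (w : V × V → ℝ) :
    Submodule ℝ (V × V → ℝ) where
  carrier := {d | (∀ e, e ∉ E → d e = 0) ∧
    (∀ u : V, ∑ e ∈ E.filter (·.1 = u), d e = ∑ e ∈ E.filter (·.2 = u), d e) ∧
    ∑ e ∈ E, w e * d e = 0}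
  add_mem' := by
    rintro d d' ⟨hE, hcons, hw⟩ ⟨hE', hcons', hw'⟩
    refine ⟨fun e he => by simp [hE e he, hE' e he], fun u => ?_, ?_⟩
    · simp only [Pi.add_apply, sum_add_distrib, hcons, hcons']
    · simp only [Pi.add_apply, mul_add, sum_add_distrib, hw, hw', add_zero]
  zero_mem' := by simp
  smul_mem' := by
    rintro t d ⟨hE, hcons, hw⟩
    refine ⟨fun e he => by simp [hE e he], fun u => ?_, ?_⟩
    · simp only [Pi.smul_apply, smul_eq_mul, ← mul_sum, hcons]
    · simp only [Pi.smul_apply, smul_eq_mul, mul_left_comm (w _), ← mul_sum, hw, mul_zero]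

theorem chi_mem_zeroWeightCirculations {E C : Finset (V × V)} {w : V × V → ℝ}
    (hC : IsCycle C) (hCE : C ⊆ E) (hw : ∑ e ∈ C, w e = 0) :
    chi C ∈ zeroWeightCirculations E w := by
  refine ⟨fun e he => if_neg fun hc => he (hCE hc), fun u => ?_, ?_⟩
  · rw [sum_filter_chi hCE, sum_filter_chi hCE, hC.card_filter_fst_eq_card_filter_snd]
  · rw [sum_mul_chi hCE, hw]

theorem memP_add_of_mem_zeroWeightCirculations [Fintype V] {E : Finset (V × V)}
    {w y d : V × V → ℝ} (hy : memP E w y) (hd : d ∈ zeroWeightCirculations E w)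
    (hnonneg : 0 ≤ y + d) : memP E w (y + d) := by
  obtain ⟨-, hyE, hycons, hyw⟩ := hy
  obtain ⟨hdE, hdcons, hdw⟩ := hd
  refine ⟨hnonneg, fun e he => by simp [hyE e he, hdE e he], fun u => ?_, ?_⟩
  · simp only [Pi.add_apply, sum_add_distrib, hycons, hdcons]
  · simp only [Pi.add_apply, mul_add, sum_add_distrib, hyw, hdw, add_zero]

end Circulation

/-- the support of a vertex of `P(G,w)` contains no zero-weight cycle. -/
theorem stmt_3 {V : Type} [Fintype V] [DecidableEq V]
    (E : Finset (V × V)) (w : V × V → ℝ) (y : V × V → ℝ)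
    (hv : IsVertexOf {z | memP E w z} y) :
    ¬ ∃ C : Finset (V × V), IsCycle C ∧ C ⊆ E ∧ (∑ e ∈ C, w e) = 0 ∧
        ∀ e ∈ C, 0 < y e := by
  rintro ⟨C, hC, hCE, hw, hpos⟩
  have hy : memP E w y := hv.1
  obtain ⟨e₀, he₀⟩ := hC.nonempty
  set ε := C.inf' ⟨e₀, he₀⟩ y
  have hε : 0 < ε := (lt_inf'_iff _).2 hpos
  have hd : ε • chi C ∈ zeroWeightCirculations E w :=
    Submodule.smul_mem _ ε (chi_mem_zeroWeightCirculations hC hCE hw)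
  have hadd : 0 ≤ y + ε • chi C := fun e => by
    by_cases he : e ∈ C <;> simp [chi, he, hy.1 e, hε.le, add_nonneg]
  have hsub : 0 ≤ y + -(ε • chi C) := fun e => by
    by_cases he : e ∈ C
    · simpa [chi, he] using inf'_le y he
    · simp [chi, he, hy.1 e]
  have hzero := hv.eq_zero_of_add_mem_of_sub_mem
    (memP_add_of_mem_zeroWeightCirculations hy hd hadd)
    (sub_eq_add_neg y _ ▸ memP_add_of_mem_zeroWeightCirculations hy (neg_mem hd) hsub)
  exact hε.ne' (by simpa [chi, he₀] using congrFun hzero e₀)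
end

section
/- In the graph of the previous construction (directed 2k-cycle through x₁,y₁,…,x_k,y_k with arc weights -1, plus parallel paths (x_i,z_i,y_i) and (x_i,z'_i,y_i) with arc weights 2k), the unique negative-weight simple directed cycle is the base cycle itself, of weight -2k. -/
open Finset

/-- A 2-cycle: a negative cycle and a positive cycle whose union contains no
other cycle. -/
def IsTwoCycle {V : Type} [Fintype V] [DecidableEq V] (E : Finset (V × V))
    (w : V × V → ℝ) (C₁ C₂ : Finset (V × V)) : Prop :=
  IsCycle C₁ ∧ IsCycle C₂ ∧ C₁ ⊆ E ∧ C₂ ⊆ E ∧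
  (∑ e ∈ C₁, w e) < 0 ∧ 0 < (∑ e ∈ C₂, w e) ∧
  ∀ C : Finset (V × V), IsCycle C → C ⊆ C₁ ∪ C₂ → C = C₁ ∨ C = C₂

/-- Vertices: `(0,i) = xᵢ`, `(1,i) = yᵢ`, `(2,i) = zᵢ`, `(3,i) = z'ᵢ`.  The arcs:
the base `2k`-cycle `xᵢ → yᵢ → xᵢ₊₁`, plus the parallel paths `xᵢ → zᵢ → yᵢ`
and `xᵢ → z'ᵢ → yᵢ`. -/
def gE (k : ℕ) [NeZero k] : Finset ((Fin 4 × ZMod k) × (Fin 4 × ZMod k)) :=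
  (Finset.univ.image fun i : ZMod k => (((0 : Fin 4), i), ((1 : Fin 4), i))) ∪
  (Finset.univ.image fun i : ZMod k => (((1 : Fin 4), i), ((0 : Fin 4), i + 1))) ∪
  (Finset.univ.image fun i : ZMod k => (((0 : Fin 4), i), ((2 : Fin 4), i))) ∪
  (Finset.univ.image fun i : ZMod k => (((2 : Fin 4), i), ((1 : Fin 4), i))) ∪
  (Finset.univ.image fun i : ZMod k => (((0 : Fin 4), i), ((3 : Fin 4), i))) ∪
  (Finset.univ.image fun i : ZMod k => (((3 : Fin 4), i), ((1 : Fin 4), i)))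

/-- Arc weights: the base-cycle arcs (between `x`- and `y`-vertices) have
weight `-1`; all detour arcs have weight `2k`. -/
def gw (k : ℕ) [NeZero k] : (Fin 4 × ZMod k) × (Fin 4 × ZMod k) → ℝ :=
  fun e => if e.1.1 ≤ 1 ∧ e.2.1 ≤ 1 then -1 else 2 * k

/-- The base `2k`-cycle `x₁ → y₁ → x₂ → ⋯ → y_k → x₁`, as an arc set. -/
def gBase (k : ℕ) [NeZero k] : Finset ((Fin 4 × ZMod k) × (Fin 4 × ZMod k)) :=
  (Finset.univ.image fun i : ZMod k => (((0 : Fin 4), i), ((1 : Fin 4), i))) ∪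
  (Finset.univ.image fun i : ZMod k => (((1 : Fin 4), i), ((0 : Fin 4), i + 1)))

/-! A detour arc `xᵢ → zᵢ` or `zᵢ → yᵢ` shares its tail or its head with the base arc `xᵢ → yᵢ`,
so a cycle using a detour arc misses a base arc. It then has at most `2k - 1` arcs of weight `-1`
and at least one of weight `2k`, so its weight is positive. A negative cycle therefore lies inside
the base cycle, and a cycle contained in a cycle is that cycle. -/

namespace IsCycle

variable {V : Type} [DecidableEq V] {C D : Finset (V × V)}

theorem snd_eq_of_mem (hC : IsCycle C) {a b c : V} (hab : (a, b) ∈ C) (hac : (a, c) ∈ C) :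
    b = c := by
  obtain ⟨n, f, hf, rfl⟩ := hC
  simp only [mem_image, mem_univ, true_and, Prod.mk.injEq] at hab hac
  obtain ⟨i, rfl, rfl⟩ := hab
  obtain ⟨j, hj, rfl⟩ := hac
  rw [hf hj]

theorem fst_eq_of_mem (hC : IsCycle C) {a b c : V} (hac : (a, c) ∈ C) (hbc : (b, c) ∈ C) :
    a = b := by
  obtain ⟨n, f, hf, rfl⟩ := hC
  simp only [mem_image, mem_univ, true_and, Prod.mk.injEq] at hac hbc
  obtain ⟨i, rfl, rfl⟩ := hac
  obtain ⟨j, rfl, hj⟩ := hbc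
  rw [add_right_cancel (hf hj)]

theorem eq_of_subset (hC : IsCycle C) (hD : IsCycle D) (hCD : C ⊆ D) : C = D := by
  obtain ⟨n, f, -, rfl⟩ := hC
  obtain ⟨m, g, hg, rfl⟩ := hD
  have hmemD (i : ZMod (n + 1)) : (f i, f (i + 1)) ∈ univ.image fun j => (g j, g (j + 1)) :=
    hCD (mem_image_of_mem _ (mem_univ i))
  have hnext (i : ZMod (n + 1)) (j : ZMod (m + 1)) (hji : g j = f i) : g (j + 1) = f (i + 1) := by
    obtain ⟨j', -, hj'⟩ := mem_image.1 (hmemD i)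
    obtain ⟨hj'i, hj'next⟩ := Prod.mk.inj hj'
    obtain rfl := hg (hj'i.trans hji.symm)
    exact hj'next
  obtain ⟨j₀, -, hj₀⟩ := mem_image.1 (hmemD 0)
  have hreach (t : ℕ) : ∃ i, g (j₀ + t) = f i := by
    induction t with
    | zero => exact ⟨0, by simpa using (Prod.mk.inj hj₀).1⟩
    | succ t ih =>
      obtain ⟨i, hi⟩ := ih
      exact ⟨i + 1, by rw [Nat.cast_succ, ← add_assoc, hnext i _ hi]⟩
  refine hCD.antisymm fun e he => ?_
  obtain ⟨j, -, rfl⟩ := mem_image.1 he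
  obtain ⟨i, hi⟩ := hreach (j - j₀).val
  rw [ZMod.natCast_zmod_val, add_sub_cancel] at hi
  exact mem_image.2 ⟨i, mem_univ _, by rw [hi, hnext i j hi]⟩

end IsCycle

theorem isCycle_image_range {V : Type} [DecidableEq V] {φ : ℕ → V} {N : ℕ} (hN : 0 < N)
    (hinj : Set.InjOn φ (Set.Iio N)) (hper : φ N = φ 0) :
    IsCycle ((range N).image fun t => (φ t, φ (t + 1))) := by
  obtain ⟨n, rfl⟩ : ∃ n, N = n + 1 := ⟨N - 1, by omega⟩
  refine ⟨n, fun i => φ i.val,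
    fun i j h => ZMod.val_injective _ (hinj (ZMod.val_lt i) (ZMod.val_lt j) h), ?_⟩
  have hsucc (i : ZMod (n + 1)) : φ (i + 1).val = φ (i.val + 1) := by
    have hi : i + 1 = ((i.val + 1 : ℕ) : ZMod (n + 1)) := by
      rw [Nat.cast_succ, ZMod.natCast_zmod_val]
    rw [hi, ZMod.val_natCast]
    rcases Nat.lt_or_ge (i.val + 1) (n + 1) with hlt | hge
    · rw [Nat.mod_eq_of_lt hlt]
    · rw [show i.val + 1 = n + 1 by have := ZMod.val_lt i; omega, Nat.mod_self, hper]
  ext e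
  simp only [mem_image, mem_univ, true_and, mem_range, hsucc]
  constructor
  · rintro ⟨t, ht, rfl⟩
    exact ⟨t, by rw [ZMod.val_cast_of_lt ht]⟩
  · rintro ⟨i, rfl⟩
    exact ⟨i.val, ZMod.val_lt i, rfl⟩

section Construction

variable (k : ℕ)

/-- The `t`-th vertex `x₀, y₀, x₁, y₁, …` met along the base cycle. -/
def baseVertex (t : ℕ) : Fin 4 × ZMod k := (⟨t % 2, by omega⟩, ((t / 2 : ℕ) : ZMod k))

theorem baseVertex_two_mul (j : ℕ) : baseVertex k (2 * j) = (0, (j : ZMod k)) := by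
  simp [baseVertex]

theorem baseVertex_two_mul_add_one (j : ℕ) : baseVertex k (2 * j + 1) = (1, (j : ZMod k)) := by
  simp only [baseVertex, Prod.mk.injEq]
  exact ⟨Fin.ext (by simp), by congr 2; omega⟩

theorem baseVertex_injOn : Set.InjOn (baseVertex k) (Set.Iio (2 * k)) := by
  intro a ha b hb hab
  simp only [baseVertex, Prod.mk.injEq, Fin.mk.injEq, ZMod.natCast_eq_natCast_iff'] at hab
  simp only [Set.mem_Iio] at ha hb
  rw [Nat.mod_eq_of_lt (by omega : a / 2 < k), Nat.mod_eq_of_lt (by omega : b / 2 < k)] at hab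
  omega

variable [NeZero k]

theorem gBase_eq_image_range :
    gBase k = (range (2 * k)).image fun t => (baseVertex k t, baseVertex k (t + 1)) := by
  ext e
  simp only [gBase, mem_union, mem_image, mem_univ, true_and, mem_range]
  constructor
  · have hcast (i : ZMod k) : ((i.val + 1 : ℕ) : ZMod k) = i + 1 := by
      rw [Nat.cast_succ, ZMod.natCast_zmod_val]
    have hlt (i : ZMod k) : i.val < k := ZMod.val_lt i
    rintro (⟨i, rfl⟩ | ⟨i, rfl⟩)
    · refine ⟨2 * i.val, by linarith [hlt i], ?_⟩
      rw [baseVertex_two_mul, baseVertex_two_mul_add_one, ZMod.natCast_zmod_val]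
    · refine ⟨2 * i.val + 1, by linarith [hlt i], ?_⟩
      rw [baseVertex_two_mul_add_one, show 2 * i.val + 1 + 1 = 2 * (i.val + 1) by ring,
        baseVertex_two_mul, hcast, ZMod.natCast_zmod_val]
  · rintro ⟨t, -, rfl⟩
    obtain ⟨j, rfl | rfl⟩ := Nat.even_or_odd' t
    · exact Or.inl ⟨j, by rw [baseVertex_two_mul, baseVertex_two_mul_add_one]⟩
    · refine Or.inr ⟨j, ?_⟩
      rw [baseVertex_two_mul_add_one, show 2 * j + 1 + 1 = 2 * (j + 1) by ring,
        baseVertex_two_mul, Nat.cast_succ]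

theorem isCycle_gBase : IsCycle (gBase k) := by
  rw [gBase_eq_image_range]
  refine isCycle_image_range (Nat.mul_pos two_pos (Nat.pos_of_neZero k)) (baseVertex_injOn k) ?_
  simp [baseVertex]

theorem card_gBase : #(gBase k) = 2 * k := by
  rw [gBase_eq_image_range, card_image_of_injOn, card_range]
  exact fun a ha b hb hab => baseVertex_injOn k (by simpa using ha) (by simpa using hb)
    (Prod.mk.inj hab).1

theorem gBase_subset_gE : gBase k ⊆ gE k := by
  intro e he
  simp only [gBase, gE, mem_union] at he ⊢
  tauto

variable {k}

theorem gw_of_mem_gBase {e : (Fin 4 × ZMod k) × (Fin 4 × ZMod k)} (he : e ∈ gBase k) :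
    gw k e = -1 := by
  simp only [gBase, mem_union, mem_image, mem_univ, true_and] at he
  rcases he with ⟨i, rfl⟩ | ⟨i, rfl⟩ <;> simp [gw]

theorem gw_of_mem_gE_of_notMem_gBase {e : (Fin 4 × ZMod k) × (Fin 4 × ZMod k)} (he : e ∈ gE k)
    (he' : e ∉ gBase k) : gw k e = 2 * k := by
  simp only [gE, gBase, mem_union, mem_image, mem_univ, true_and] at he he'
  rcases he with ((((⟨i, rfl⟩ | ⟨i, rfl⟩) | ⟨i, rfl⟩) | ⟨i, rfl⟩) | ⟨i, rfl⟩) | ⟨i, rfl⟩ <;>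
    simp_all [gw]

theorem sum_gw_gBase : ∑ e ∈ gBase k, gw k e = -(2 * k) := by
  rw [sum_congr rfl fun e he => gw_of_mem_gBase he, sum_const, card_gBase]
  simp

theorem sum_gw_of_subset_gE {C : Finset ((Fin 4 × ZMod k) × (Fin 4 × ZMod k))} (hCE : C ⊆ gE k) :
    ∑ e ∈ C, gw k e = 2 * k * #(C \ gBase k) - #(C ∩ gBase k) := by
  rw [← sum_inter_add_sum_sdiff C (gBase k),
    sum_congr rfl fun e he => gw_of_mem_gBase (mem_inter.1 he).2,
    sum_congr rfl fun e he => gw_of_mem_gE_of_notMem_gBase (hCE (mem_sdiff.1 he).1)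
      (mem_sdiff.1 he).2]
  simp only [sum_const, nsmul_eq_mul]
  ring

theorem IsCycle.exists_mem_gBase_notMem {C : Finset ((Fin 4 × ZMod k) × (Fin 4 × ZMod k))}
    (hC : IsCycle C) {e : (Fin 4 × ZMod k) × (Fin 4 × ZMod k)} (heC : e ∈ C) (he : e ∈ gE k)
    (he' : e ∉ gBase k) : ∃ a ∈ gBase k, a ∉ C := by
  simp only [gE, gBase, mem_union, mem_image, mem_univ, true_and] at he he'
  rcases he with ((((⟨i, rfl⟩ | ⟨i, rfl⟩) | ⟨i, rfl⟩) | ⟨i, rfl⟩) | ⟨i, rfl⟩) | ⟨i, rfl⟩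
  · exact absurd (Or.inl ⟨i, rfl⟩) he'
  · exact absurd (Or.inr ⟨i, rfl⟩) he'
  all_goals refine ⟨((0, i), (1, i)), by simp [gBase], fun ha => ?_⟩
  · simpa using hC.snd_eq_of_mem ha heC
  · simpa using hC.fst_eq_of_mem ha heC
  · simpa using hC.snd_eq_of_mem ha heC
  · simpa using hC.fst_eq_of_mem ha heC

theorem IsCycle.subset_gBase_of_sum_gw_neg {C : Finset ((Fin 4 × ZMod k) × (Fin 4 × ZMod k))}
    (hC : IsCycle C) (hCE : C ⊆ gE k) (hneg : ∑ e ∈ C, gw k e < 0) : C ⊆ gBase k := by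
  by_contra hCB
  obtain ⟨e, heC, he⟩ := not_subset.1 hCB
  obtain ⟨a, haB, haC⟩ := hC.exists_mem_gBase_notMem heC (hCE heC) he
  have hdetour : 1 ≤ #(C \ gBase k) := card_pos.2 ⟨e, mem_sdiff.2 ⟨heC, he⟩⟩
  have hbase : #(C ∩ gBase k) + 1 ≤ 2 * k := by
    rw [← card_gBase k]
    exact card_lt_card ⟨inter_subset_right, fun h => haC (mem_inter.1 (h haB)).1⟩
  have hk : (0 : ℝ) < k := by exact_mod_cast Nat.pos_of_neZero k
  rw [sum_gw_of_subset_gE hCE] at hneg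
  have hdetour' : (1 : ℝ) ≤ #(C \ gBase k) := by exact_mod_cast hdetour
  have hbase' : (#(C ∩ gBase k) : ℝ) + 1 ≤ 2 * k := by exact_mod_cast hbase
  nlinarith

end Construction

theorem stmt_19_general (k : ℕ) [NeZero k] :
    (∀ C : Finset ((Fin 4 × ZMod k) × (Fin 4 × ZMod k)),
      (IsCycle C ∧ C ⊆ gE k ∧ (∑ e ∈ C, gw k e) < 0) ↔ C = gBase k) ∧
    (∑ e ∈ gBase k, gw k e) = -(2 * k) := by
  refine ⟨fun C => ⟨fun ⟨hC, hCE, hneg⟩ => ?_, ?_⟩, sum_gw_gBase⟩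
  · exact hC.eq_of_subset (isCycle_gBase k) (hC.subset_gBase_of_sum_gw_neg hCE hneg)
  · rintro rfl
    have hk : (0 : ℝ) < k := by exact_mod_cast Nat.pos_of_neZero k
    exact ⟨isCycle_gBase k, gBase_subset_gE k, by rw [sum_gw_gBase]; linarith⟩

/-- in the graph `(gE k, gw k)`, the unique negative-weight simple
directed cycle is the base cycle, and its weight is `-2k`. -/
theorem stmt_19 (k : ℕ) (hk : 0 < k) [NeZero k] :
    (∀ C : Finset ((Fin 4 × ZMod k) × (Fin 4 × ZMod k)),
      (IsCycle C ∧ C ⊆ gE k ∧ (∑ e ∈ C, gw k e) < 0) ↔ C = gBase k) ∧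
    (∑ e ∈ gBase k, gw k e) = -(2 * k) :=
  stmt_19_general k
end
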